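/- arXiv:1602.02577 — 2 statements merged into one kernel-verified Lean document; each statement's English description precedes it below -/
import Mathlib

section
/- The subgroup ⟨P, L⟩ of Sym(Triads) generated by P and L consists exactly of the six distinct elements Id, P, L∘P, P∘L∘P, L∘P∘L∘P, P∘L∘P∘L∘P; it has order 6 and is non-commutative, hence is isomorphic to Sym(3), the dihedral group of order 6. -/
/-- Pitch classes: the integers mod 12. -/
abbrev PC := ZMod 12

/-- Ordered triples of pitch classes. -/
abbrev T3 := PC × PC × PC

/-- The set of consonant triads: major triads `⟨x, x+4, x+7⟩` and
minor triads `⟨x+7, x+3, x⟩`. -/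
def Triads : Set T3 :=
  {t | (∃ x : PC, t = (x, x + 4, x + 7)) ∨ (∃ x : PC, t = (x + 7, x + 3, x))}

instance : DecidablePred (· ∈ Triads) := fun t =>
  decidable_of_iff ((∃ x : PC, t = (x, x + 4, x + 7)) ∨ (∃ x : PC, t = (x + 7, x + 3, x)))
    Iff.rfl

/-- Transposition `T_n`, componentwise on triples. -/
def Tfun (n : PC) (t : T3) : T3 := (t.1 + n, t.2.1 + n, t.2.2 + n)

/-- Inversion `I_n`, componentwise on triples. -/
def Ifun (n : PC) (t : T3) : T3 := (-t.1 + n, -t.2.1 + n, -t.2.2 + n)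

/-- The parallel transformation `P⟨x₁,x₂,x₃⟩ = I_{x₁+x₃}⟨x₁,x₂,x₃⟩`. -/
def Pfun (t : T3) : T3 := Ifun (t.1 + t.2.2) t

/-- The leading-tone-exchange `L⟨x₁,x₂,x₃⟩ = I_{x₂+x₃}⟨x₁,x₂,x₃⟩`. -/
def Lfun (t : T3) : T3 := Ifun (t.2.1 + t.2.2) t

lemma Tfun_mem (n : PC) (t : T3) (h : t ∈ Triads) : Tfun n t ∈ Triads := by
  rcases h with ⟨x, rfl⟩ | ⟨x, rfl⟩
  · exact Or.inl ⟨x + n, by simp only [Tfun, Prod.mk.injEq]; exact ⟨by first | ring | trivial, by first | ring | trivial, by first | ring | trivial⟩⟩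
  · exact Or.inr ⟨x + n, by simp only [Tfun, Prod.mk.injEq]; exact ⟨by first | ring | trivial, by first | ring | trivial, by first | ring | trivial⟩⟩

lemma Ifun_mem (n : PC) (t : T3) (h : t ∈ Triads) : Ifun n t ∈ Triads := by
  rcases h with ⟨x, rfl⟩ | ⟨x, rfl⟩
  · exact Or.inr ⟨-x + n - 7,
      by simp only [Ifun, Prod.mk.injEq]; exact ⟨by ring, by ring, by ring⟩⟩
  · exact Or.inl ⟨-x + n - 7,
      by simp only [Ifun, Prod.mk.injEq]; exact ⟨by ring, by ring, by ring⟩⟩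

lemma Pfun_mem (t : T3) (h : t ∈ Triads) : Pfun t ∈ Triads := by
  rcases h with ⟨x, rfl⟩ | ⟨x, rfl⟩
  · exact Or.inr ⟨x,
      by simp only [Pfun, Ifun, Prod.mk.injEq]; exact ⟨by ring, by ring, by ring⟩⟩
  · exact Or.inl ⟨x,
      by simp only [Pfun, Ifun, Prod.mk.injEq]; exact ⟨by ring, by ring, by ring⟩⟩

lemma Lfun_mem (t : T3) (h : t ∈ Triads) : Lfun t ∈ Triads := by
  rcases h with ⟨x, rfl⟩ | ⟨x, rfl⟩
  · exact Or.inr ⟨x + 4,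
      by simp only [Lfun, Ifun, Prod.mk.injEq]; exact ⟨by ring, by ring, by ring⟩⟩
  · exact Or.inl ⟨x - 4,
      by simp only [Lfun, Ifun, Prod.mk.injEq]; exact ⟨by ring, by ring, by ring⟩⟩

lemma Tfun_neg (n : PC) (t : T3) : Tfun (-n) (Tfun n t) = t := by
  simp only [Tfun]; exact Prod.ext (by ring) (Prod.ext (by ring) (by ring))

lemma Ifun_invol (n : PC) (t : T3) : Ifun n (Ifun n t) = t := by
  simp only [Ifun]; exact Prod.ext (by ring) (Prod.ext (by ring) (by ring))

lemma Pfun_invol (t : T3) : Pfun (Pfun t) = t := by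
  simp only [Pfun, Ifun]; exact Prod.ext (by ring) (Prod.ext (by ring) (by ring))

lemma Lfun_invol (t : T3) : Lfun (Lfun t) = t := by
  simp only [Lfun, Ifun]; exact Prod.ext (by ring) (Prod.ext (by ring) (by ring))

/-- Transposition `T_n` as a bijection of the set of consonant triads. -/
def Tperm (n : PC) : Equiv.Perm ↥Triads where
  toFun t := ⟨Tfun n t, Tfun_mem n t t.2⟩
  invFun t := ⟨Tfun (-n) t, Tfun_mem (-n) t t.2⟩
  left_inv t := Subtype.ext (Tfun_neg n t)
  right_inv t := Subtype.ext (by simpa using Tfun_neg (-n) t)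

/-- Inversion `I_n` as a bijection of the set of consonant triads. -/
def Iperm (n : PC) : Equiv.Perm ↥Triads :=
  Function.Involutive.toPerm (fun t => ⟨Ifun n t, Ifun_mem n t t.2⟩)
    (fun t => Subtype.ext (Ifun_invol n t))

/-- `P` as a bijection of the set of consonant triads. -/
def Pperm : Equiv.Perm ↥Triads :=
  Function.Involutive.toPerm (fun t => ⟨Pfun t, Pfun_mem t t.2⟩)
    (fun t => Subtype.ext (Pfun_invol t))

/-- `L` as a bijection of the set of consonant triads. -/
def Lperm : Equiv.Perm ↥Triads :=
  Function.Involutive.toPerm (fun t => ⟨Lfun t, Lfun_mem t t.2⟩)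
    (fun t => Subtype.ext (Lfun_invol t))

/-- The PL-group: the subgroup of `Sym(Triads)` generated by `P` and `L`. -/
def PLgroup : Subgroup (Equiv.Perm ↥Triads) := Subgroup.closure {Pperm, Lperm}


/-! ### Auxiliary material for the main theorem -/

/-- A distinguished triad: the C major triad. -/
def c0 : ↥Triads := ⟨((0 : PC), 4, 7), Or.inl ⟨0, rfl⟩⟩

/-- Table for the homomorphism from `Sym(3)` to the PL-group. -/
def phifun (σ : Equiv.Perm (Fin 3)) : Equiv.Perm ↥Triads :=
  if σ = 1 then 1
  else if σ = Equiv.swap 0 1 then Pperm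
  else if σ = Equiv.swap 1 2 then Pperm * Lperm * Pperm * Lperm * Pperm
  else if σ = Equiv.swap 0 1 * Equiv.swap 1 2 * Equiv.swap 0 1 then Pperm * Lperm * Pperm
  else if σ = Equiv.swap 0 1 * Equiv.swap 1 2 then Lperm * Pperm * Lperm * Pperm
  else Lperm * Pperm

lemma perm3_exhaust (σ : Equiv.Perm (Fin 3)) :
    σ = 1 ∨ σ = Equiv.swap 0 1 ∨ σ = Equiv.swap 1 2 ∨
      σ = Equiv.swap 0 1 * Equiv.swap 1 2 * Equiv.swap 0 1 ∨
      σ = Equiv.swap 0 1 * Equiv.swap 1 2 ∨ σ = Equiv.swap 1 2 * Equiv.swap 0 1 := by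
  revert σ; decide

lemma phifun_mul (σ τ : Equiv.Perm (Fin 3)) :
    phifun (σ * τ) = phifun σ * phifun τ := by
  rcases perm3_exhaust σ with rfl | rfl | rfl | rfl | rfl | rfl <;>
    rcases perm3_exhaust τ with rfl | rfl | rfl | rfl | rfl | rfl <;>
    (apply Equiv.ext; intro t; rcases t with ⟨t, (⟨x, rfl⟩ | ⟨x, rfl⟩)⟩ <;> (revert x; decide))

/-- The table as a monoid homomorphism. -/
def phihom : Equiv.Perm (Fin 3) →* Equiv.Perm ↥Triads := MonoidHom.mk' phifun phifun_mul

lemma phi_swap12 : phifun (Equiv.swap 1 2) = Lperm := by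
  (apply Equiv.ext; intro t; rcases t with ⟨t, (⟨x, rfl⟩ | ⟨x, rfl⟩)⟩ <;> (revert x; decide))

lemma Pperm_mem : Pperm ∈ PLgroup :=
  Subgroup.subset_closure (Set.mem_insert _ _)

lemma Lperm_mem : Lperm ∈ PLgroup :=
  Subgroup.subset_closure (Set.mem_insert_of_mem _ rfl)

lemma phihom_range : phihom.range = PLgroup := by
  apply le_antisymm
  · rintro x ⟨σ, rfl⟩
    rcases perm3_exhaust σ with rfl | rfl | rfl | rfl | rfl | rfl
    · exact one_mem _
    · exact Pperm_mem
    · exact mul_mem (mul_mem (mul_mem (mul_mem Pperm_mem Lperm_mem) Pperm_mem) Lperm_mem)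
        Pperm_mem
    · exact mul_mem (mul_mem Pperm_mem Lperm_mem) Pperm_mem
    · exact mul_mem (mul_mem (mul_mem Lperm_mem Pperm_mem) Lperm_mem) Pperm_mem
    · exact mul_mem Lperm_mem Pperm_mem
  · rw [PLgroup]
    apply Subgroup.closure_le (K := phihom.range) |>.mpr
    rintro x (rfl | rfl)
    · exact ⟨Equiv.swap 0 1, rfl⟩
    · exact ⟨Equiv.swap 1 2, phi_swap12⟩

lemma phihom_injective : Function.Injective phihom := by
  refine (injective_iff_map_eq_one phihom).mpr fun σ h => ?_
  rcases perm3_exhaust σ with rfl | rfl | rfl | rfl | rfl | rfl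
  · rfl
  all_goals exact absurd (congrArg (fun f : Equiv.Perm ↥Triads => f c0) h) (by decide)

/-- The subgroup `⟨P, L⟩` of `Sym(Triads)` consists exactly of the six distinct
elements `Id, P, L∘P, P∘L∘P, L∘P∘L∘P, P∘L∘P∘L∘P`; it has order 6, is
non-commutative, and hence is isomorphic to `Sym(3)`, the dihedral group of
order 6. -/
theorem PLgroup_is_dihedral_of_order_6 :
    (PLgroup : Set (Equiv.Perm ↥Triads)) =
      {1, Pperm, Lperm * Pperm, Pperm * Lperm * Pperm,
        Lperm * Pperm * Lperm * Pperm, Pperm * Lperm * Pperm * Lperm * Pperm} ∧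
    Nat.card PLgroup = 6 ∧
    (∃ a ∈ PLgroup, ∃ b ∈ PLgroup, a * b ≠ b * a) ∧
    Nonempty (PLgroup ≃* Equiv.Perm (Fin 3)) := by
  have e : ↥PLgroup ≃* Equiv.Perm (Fin 3) :=
    ((MulEquiv.subgroupCongr phihom_range).symm.trans
      (MonoidHom.ofInjective phihom_injective).symm)
  refine ⟨?_, ?_, ?_, ⟨e⟩⟩
  · apply Set.eq_of_subset_of_subset
    · intro x hx
      rw [← phihom_range] at hx
      obtain ⟨σ, rfl⟩ := hx
      rcases perm3_exhaust σ with rfl | rfl | rfl | rfl | rfl | rfl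
      · exact Set.mem_insert _ _
      · exact Set.mem_insert_of_mem _ (Set.mem_insert _ _)
      · refine Set.mem_insert_of_mem _ (Set.mem_insert_of_mem _ (Set.mem_insert_of_mem _
          (Set.mem_insert_of_mem _ (Set.mem_insert_of_mem _ rfl))))
      · exact Set.mem_insert_of_mem _ (Set.mem_insert_of_mem _ (Set.mem_insert_of_mem _
          (Set.mem_insert _ _)))
      · exact Set.mem_insert_of_mem _ (Set.mem_insert_of_mem _ (Set.mem_insert_of_mem _
          (Set.mem_insert_of_mem _ (Set.mem_insert _ _))))
      · exact Set.mem_insert_of_mem _ (Set.mem_insert_of_mem _ (Set.mem_insert _ _))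
    · intro x hx
      rcases hx with rfl | rfl | rfl | rfl | rfl | rfl
      · exact one_mem _
      · exact Pperm_mem
      · exact mul_mem Lperm_mem Pperm_mem
      · exact mul_mem (mul_mem Pperm_mem Lperm_mem) Pperm_mem
      · exact mul_mem (mul_mem (mul_mem Lperm_mem Pperm_mem) Lperm_mem) Pperm_mem
      · exact mul_mem (mul_mem (mul_mem (mul_mem Pperm_mem Lperm_mem) Pperm_mem) Lperm_mem)
          Pperm_mem
  · rw [Nat.card_congr e.toEquiv, Nat.card_eq_fintype_card]
    decide
  · refine ⟨Pperm, Pperm_mem, Lperm, Lperm_mem, fun h => ?_⟩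
    exact absurd (congrArg (fun f : Equiv.Perm ↥Triads => f c0) h) (by decide)
end

section
/- Let Ḡ ≤ Sym(Hex) be the group of restrictions to Hex of the elements of the PL-group ⟨P, L⟩, and let H̄ ≤ Sym(Hex) be the group of restrictions to Hex of the elements of H = {T₀, T₄, T₈, I₁, I₅, I₉}. Then Ḡ and H̄ are dual groups in the sense of Lewin: each acts simply transitively on Hex, and each is the centralizer of the other in Sym(Hex). Moreover both Ḡ and H̄ are isomorphic to Sym(3), the dihedral group of order 6. -/
/-- The hexatonic cycle `Hex`: the six triads `E♭, e♭, B, b, G, g`. -/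
def HexT : Set T3 :=
  {(3, 7, 10), (10, 6, 3), (11, 3, 6), (6, 2, 11), (7, 11, 2), (2, 10, 7)}

lemma hP_Hex : ∀ t ∈ HexT, Pfun t ∈ HexT := by
  intro t ht; simp only [HexT, Set.mem_insert_iff, Set.mem_singleton_iff] at ht ⊢
  rcases ht with rfl | rfl | rfl | rfl | rfl | rfl <;> decide

lemma hL_Hex : ∀ t ∈ HexT, Lfun t ∈ HexT := by
  intro t ht; simp only [HexT, Set.mem_insert_iff, Set.mem_singleton_iff] at ht ⊢
  rcases ht with rfl | rfl | rfl | rfl | rfl | rfl <;> decide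

lemma hT0_Hex : ∀ t ∈ HexT, Tfun 0 t ∈ HexT := by
  intro t ht; simp only [HexT, Set.mem_insert_iff, Set.mem_singleton_iff] at ht ⊢
  rcases ht with rfl | rfl | rfl | rfl | rfl | rfl <;> decide

lemma hT4_Hex : ∀ t ∈ HexT, Tfun 4 t ∈ HexT := by
  intro t ht; simp only [HexT, Set.mem_insert_iff, Set.mem_singleton_iff] at ht ⊢
  rcases ht with rfl | rfl | rfl | rfl | rfl | rfl <;> decide

lemma hT8_Hex : ∀ t ∈ HexT, Tfun 8 t ∈ HexT := by
  intro t ht; simp only [HexT, Set.mem_insert_iff, Set.mem_singleton_iff] at ht ⊢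
  rcases ht with rfl | rfl | rfl | rfl | rfl | rfl <;> decide

lemma hI1_Hex : ∀ t ∈ HexT, Ifun 1 t ∈ HexT := by
  intro t ht; simp only [HexT, Set.mem_insert_iff, Set.mem_singleton_iff] at ht ⊢
  rcases ht with rfl | rfl | rfl | rfl | rfl | rfl <;> decide

lemma hI5_Hex : ∀ t ∈ HexT, Ifun 5 t ∈ HexT := by
  intro t ht; simp only [HexT, Set.mem_insert_iff, Set.mem_singleton_iff] at ht ⊢
  rcases ht with rfl | rfl | rfl | rfl | rfl | rfl <;> decide

lemma hI9_Hex : ∀ t ∈ HexT, Ifun 9 t ∈ HexT := by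
  intro t ht; simp only [HexT, Set.mem_insert_iff, Set.mem_singleton_iff] at ht ⊢
  rcases ht with rfl | rfl | rfl | rfl | rfl | rfl <;> decide

/-- The restriction of `P` to `Hex`, as a bijection of `Hex`. -/
def PHex : Equiv.Perm ↥HexT :=
  Function.Involutive.toPerm (fun t => ⟨Pfun t, hP_Hex t t.2⟩)
    (fun t => Subtype.ext (Pfun_invol t))

/-- The restriction of `L` to `Hex`, as a bijection of `Hex`. -/
def LHex : Equiv.Perm ↥HexT :=
  Function.Involutive.toPerm (fun t => ⟨Lfun t, hL_Hex t t.2⟩)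
    (fun t => Subtype.ext (Lfun_invol t))

/-- The restriction of `T₀` to `Hex`, as a bijection of `Hex`. -/
def THex0 : Equiv.Perm ↥HexT where
  toFun t := ⟨Tfun 0 t, hT0_Hex t t.2⟩
  invFun t := ⟨Tfun 0 t, hT0_Hex t t.2⟩
  left_inv t := Subtype.ext (by
    show Tfun 0 (Tfun 0 (t : T3)) = (t : T3)
    rw [show (0 : PC) = -0 from by decide]; exact Tfun_neg 0 t)
  right_inv t := Subtype.ext (by
    show Tfun 0 (Tfun 0 (t : T3)) = (t : T3)
    rw [show (0 : PC) = -0 from by decide]; exact Tfun_neg 0 t)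

/-- The restriction of `T₄` to `Hex`, as a bijection of `Hex`. -/
def THex4 : Equiv.Perm ↥HexT where
  toFun t := ⟨Tfun 4 t, hT4_Hex t t.2⟩
  invFun t := ⟨Tfun 8 t, hT8_Hex t t.2⟩
  left_inv t := Subtype.ext (by
    show Tfun 8 (Tfun 4 (t : T3)) = (t : T3)
    rw [show (8 : PC) = -4 from by decide]; exact Tfun_neg 4 t)
  right_inv t := Subtype.ext (by
    show Tfun 4 (Tfun 8 (t : T3)) = (t : T3)
    rw [show (4 : PC) = -8 from by decide]; exact Tfun_neg 8 t)

/-- The restriction of `T₈` to `Hex`, as a bijection of `Hex`. -/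
def THex8 : Equiv.Perm ↥HexT where
  toFun t := ⟨Tfun 8 t, hT8_Hex t t.2⟩
  invFun t := ⟨Tfun 4 t, hT4_Hex t t.2⟩
  left_inv t := Subtype.ext (by
    show Tfun 4 (Tfun 8 (t : T3)) = (t : T3)
    rw [show (4 : PC) = -8 from by decide]; exact Tfun_neg 8 t)
  right_inv t := Subtype.ext (by
    show Tfun 8 (Tfun 4 (t : T3)) = (t : T3)
    rw [show (8 : PC) = -4 from by decide]; exact Tfun_neg 4 t)

/-- The restriction of `I₁` to `Hex`, as a bijection of `Hex`. -/
def IHex1 : Equiv.Perm ↥HexT :=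
  Function.Involutive.toPerm (fun t => ⟨Ifun 1 t, hI1_Hex t t.2⟩)
    (fun t => Subtype.ext (Ifun_invol 1 t))

/-- The restriction of `I₅` to `Hex`, as a bijection of `Hex`. -/
def IHex5 : Equiv.Perm ↥HexT :=
  Function.Involutive.toPerm (fun t => ⟨Ifun 5 t, hI5_Hex t t.2⟩)
    (fun t => Subtype.ext (Ifun_invol 5 t))

/-- The restriction of `I₉` to `Hex`, as a bijection of `Hex`. -/
def IHex9 : Equiv.Perm ↥HexT :=
  Function.Involutive.toPerm (fun t => ⟨Ifun 9 t, hI9_Hex t t.2⟩)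
    (fun t => Subtype.ext (Ifun_invol 9 t))

/-- `Ḡ`: the group of restrictions to `Hex` of the elements of the PL-group
`⟨P, L⟩` (the group generated by the restrictions of the generators `P`, `L`). -/
def Gbar : Subgroup (Equiv.Perm ↥HexT) := Subgroup.closure {PHex, LHex}

/-- `H̄`: the group of restrictions to `Hex` of the elements of
`H = {T₀, T₄, T₈, I₁, I₅, I₉}`. -/
def Hbar : Subgroup (Equiv.Perm ↥HexT) :=
  Subgroup.closure {THex0, THex4, THex8, IHex1, IHex5, IHex9}

/-! ### Auxiliary material for the proof -/

instance : DecidablePred (· ∈ HexT) := fun t =>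
  decidable_of_iff (t = (3,7,10) ∨ t = (10,6,3) ∨ t = (11,3,6) ∨ t = (6,2,11) ∨
      t = (7,11,2) ∨ t = (2,10,7)) (by simp [HexT])

/-- The six elements of `Ḡ`, as words in `P`, `L`. -/
def LG : List (Equiv.Perm ↥HexT) :=
  [1, PHex, LHex, PHex*LHex, LHex*PHex, PHex*LHex*PHex]

/-- The six elements of `H̄`, as words in `I₁`, `I₅`. -/
def LH : List (Equiv.Perm ↥HexT) :=
  [1, IHex1, IHex5, IHex1*IHex5, IHex5*IHex1, IHex1*IHex5*IHex1]

section Generic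

variable {X : Type*} [Fintype X] [DecidableEq X]

lemma simply_trans (K : Subgroup (Equiv.Perm X)) (Lst : List (Equiv.Perm X))
    (memK : ∀ g, g ∈ K ↔ g ∈ Lst)
    (hex : ∀ Y Z : X, ∃ g ∈ Lst, g Y = Z)
    (huniq : ∀ g ∈ Lst, ∀ g' ∈ Lst, ∀ Y, g Y = g' Y → g = g') :
    ∀ Y Z : X, ∃! g : K, (g : Equiv.Perm X) Y = Z := by
  intro Y Z
  obtain ⟨g, hgL, hg⟩ := hex Y Z
  refine ⟨⟨g, (memK g).2 hgL⟩, hg, ?_⟩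
  rintro ⟨g', hg'⟩ (h : g' Y = Z)
  exact Subtype.ext (huniq g' ((memK g').1 hg') g hgL Y (by rw [h, hg]))

lemma cent_eq (K K' : Subgroup (Equiv.Perm X)) (L L' : List (Equiv.Perm X))
    (memK : ∀ g, g ∈ K ↔ g ∈ L) (memK' : ∀ g, g ∈ K' ↔ g ∈ L') (Y0 : X)
    (hex' : ∀ Z, ∃ h ∈ L', h Y0 = Z)
    (hexK : ∀ Y, ∃ g ∈ L, g Y0 = Y)
    (hcomm : ∀ g ∈ L, ∀ h ∈ L', g * h = h * g) :
    K' = Subgroup.centralizer (K : Set (Equiv.Perm X)) := by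
  refine le_antisymm ?_ ?_
  · intro h hh
    rw [Subgroup.mem_centralizer_iff]
    intro g hg
    exact hcomm g ((memK g).1 hg) h ((memK' h).1 hh)
  · intro f hf
    rw [Subgroup.mem_centralizer_iff] at hf
    obtain ⟨h, hhL, hhY0⟩ := hex' (f Y0)
    have hfh : f = h := by
      ext Y
      obtain ⟨g, hgL, hgY⟩ := hexK Y
      have h1 : g * f = f * g := hf g ((memK g).2 hgL)
      have h2 : g * h = h * g := hcomm g hgL h hhL
      calc f Y = (f*g) Y0 := by rw [Equiv.Perm.mul_apply, hgY]
        _ = (g*f) Y0 := by rw [h1]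
        _ = g (h Y0) := by rw [Equiv.Perm.mul_apply, hhY0]
        _ = (h*g) Y0 := by rw [← h2, Equiv.Perm.mul_apply]
        _ = h Y := by rw [Equiv.Perm.mul_apply, hgY]
    exact hfh ▸ (memK' h).2 hhL

/-- Build an isomorphism `K ≃* Perm (Fin 3)` from lookup tables. -/
def isoOfList (K : Subgroup (Equiv.Perm X)) (Lst : List (Equiv.Perm X))
    (memK : ∀ g, g ∈ K ↔ g ∈ Lst)
    (F : Equiv.Perm X → Equiv.Perm (Fin 3))
    (invF : Equiv.Perm (Fin 3) → Equiv.Perm X)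
    (hinv1 : ∀ g ∈ Lst, invF (F g) = g)
    (hinv2 : ∀ σ, F (invF σ) = σ)
    (hmeminv : ∀ σ, invF σ ∈ Lst)
    (hmul : ∀ g ∈ Lst, ∀ h ∈ Lst, F (g * h) = F g * F h) :
    K ≃* Equiv.Perm (Fin 3) where
  toFun g := F g
  invFun σ := ⟨invF σ, (memK _).2 (hmeminv σ)⟩
  left_inv g := Subtype.ext (hinv1 g ((memK _).1 g.2))
  right_inv := hinv2
  map_mul' g h := hmul g ((memK _).1 g.2) h ((memK _).1 h.2)

end Generic

set_option linter.unusedSectionVars false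
set_option maxRecDepth 20000

def Gs : Subgroup (Equiv.Perm ↥HexT) where
  carrier := {g | g ∈ LG}
  one_mem' := by simp [LG]
  mul_mem' := by
    intro x y hx hy
    simp only [Set.mem_setOf_eq] at *
    fin_cases hx <;> fin_cases hy <;> decide
  inv_mem' := by
    intro x hx
    simp only [Set.mem_setOf_eq] at *
    fin_cases hx <;> decide

def Hs : Subgroup (Equiv.Perm ↥HexT) where
  carrier := {g | g ∈ LH}
  one_mem' := by simp [LH]
  mul_mem' := by
    intro x y hx hy
    simp only [Set.mem_setOf_eq] at *
    fin_cases hx <;> fin_cases hy <;> decide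
  inv_mem' := by
    intro x hx
    simp only [Set.mem_setOf_eq] at *
    fin_cases hx <;> decide

lemma mem_Gbar : ∀ g, g ∈ Gbar ↔ g ∈ LG := by
  have ha : PHex ∈ Gbar := Subgroup.subset_closure (by simp)
  have hb : LHex ∈ Gbar := Subgroup.subset_closure (by simp)
  have hGs : Gbar ≤ Gs := by
    rw [Gbar, Subgroup.closure_le]
    rintro g (rfl | rfl)
    · exact show PHex ∈ LG by decide
    · exact show LHex ∈ LG by decide
  intro g
  constructor
  · exact fun hg => hGs hg
  · intro hg
    fin_cases hg
    exacts [one_mem _, ha, hb, mul_mem ha hb, mul_mem hb ha, mul_mem (mul_mem ha hb) ha]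

lemma mem_Hbar : ∀ g, g ∈ Hbar ↔ g ∈ LH := by
  have ha : IHex1 ∈ Hbar := Subgroup.subset_closure (by simp [Hbar])
  have hb : IHex5 ∈ Hbar := Subgroup.subset_closure (by simp [Hbar])
  have hGs : Hbar ≤ Hs := by
    rw [Hbar, Subgroup.closure_le]
    intro g hg
    simp only [Set.mem_insert_iff, Set.mem_singleton_iff] at hg
    rcases hg with rfl | rfl | rfl | rfl | rfl | rfl
    exacts [show THex0 ∈ LH by decide, show THex4 ∈ LH by decide,
      show THex8 ∈ LH by decide, show IHex1 ∈ LH by decide,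
      show IHex5 ∈ LH by decide, show IHex9 ∈ LH by decide]
  intro g
  constructor
  · exact fun hg => hGs hg
  · intro hg
    fin_cases hg
    exacts [one_mem _, ha, hb, mul_mem ha hb, mul_mem hb ha, mul_mem (mul_mem ha hb) ha]

def s01 : Equiv.Perm (Fin 3) := Equiv.swap 0 1
def s12 : Equiv.Perm (Fin 3) := Equiv.swap 1 2

/-- Lookup tables for the isomorphisms with `Sym(3)`. -/
def Ftab (a b : Equiv.Perm ↥HexT) (g : Equiv.Perm ↥HexT) : Equiv.Perm (Fin 3) :=
  if g = a then s01 else if g = b then s12 else if g = a*b then s01*s12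
  else if g = b*a then s12*s01 else if g = a*b*a then s01*s12*s01 else 1

def invFtab (a b : Equiv.Perm ↥HexT) (σ : Equiv.Perm (Fin 3)) : Equiv.Perm ↥HexT :=
  if σ = s01 then a else if σ = s12 then b else if σ = s01*s12 then a*b
  else if σ = s12*s01 then b*a else if σ = s01*s12*s01 then a*b*a else 1
set_option maxHeartbeats 1000000 in
lemma hexG : ∀ Y Z : ↥HexT, ∃ g ∈ LG, g Y = Z := by decide

set_option maxHeartbeats 1000000 in
lemma hexH : ∀ Y Z : ↥HexT, ∃ g ∈ LH, g Y = Z := by decide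

set_option maxHeartbeats 1000000 in
lemma huG : ∀ g ∈ LG, ∀ g' ∈ LG, ∀ Y, g Y = g' Y → g = g' := by
  intro g hg g' hg'
  fin_cases hg <;> fin_cases hg' <;> decide

set_option maxHeartbeats 1000000 in
lemma huH : ∀ g ∈ LH, ∀ g' ∈ LH, ∀ Y, g Y = g' Y → g = g' := by
  intro g hg g' hg'
  fin_cases hg <;> fin_cases hg' <;> decide

set_option maxHeartbeats 1000000 in
lemma hcommGH : ∀ g ∈ LG, ∀ h ∈ LH, g * h = h * g := by
  intro g hg h hh
  fin_cases hg <;> fin_cases hh <;> decide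

set_option maxHeartbeats 1000000 in
lemma hinv1G : ∀ g ∈ LG, invFtab PHex LHex (Ftab PHex LHex g) = g := by
  intro g hg; fin_cases hg <;> decide

set_option maxHeartbeats 1000000 in
lemma hinv2G : ∀ σ, Ftab PHex LHex (invFtab PHex LHex σ) = σ := by decide

set_option maxHeartbeats 1000000 in
lemma perm3_cases : ∀ σ : Equiv.Perm (Fin 3),
    σ = 1 ∨ σ = s01 ∨ σ = s12 ∨ σ = s01*s12 ∨ σ = s12*s01 ∨ σ = s01*s12*s01 := by decide

set_option maxHeartbeats 1000000 in
lemma hmeminvG : ∀ σ, invFtab PHex LHex σ ∈ LG := by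
  intro σ
  rcases perm3_cases σ with rfl | rfl | rfl | rfl | rfl | rfl <;> decide

set_option maxHeartbeats 1000000 in
lemma hmulG : ∀ g ∈ LG, ∀ h ∈ LG,
    Ftab PHex LHex (g * h) = Ftab PHex LHex g * Ftab PHex LHex h := by
  intro g hg h hh; fin_cases hg <;> fin_cases hh <;> decide

set_option maxHeartbeats 1000000 in
lemma hinv1H : ∀ g ∈ LH, invFtab IHex1 IHex5 (Ftab IHex1 IHex5 g) = g := by
  intro g hg; fin_cases hg <;> decide

set_option maxHeartbeats 1000000 in
lemma hinv2H : ∀ σ, Ftab IHex1 IHex5 (invFtab IHex1 IHex5 σ) = σ := by decide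

set_option maxHeartbeats 1000000 in
lemma hmeminvH : ∀ σ, invFtab IHex1 IHex5 σ ∈ LH := by
  intro σ
  rcases perm3_cases σ with rfl | rfl | rfl | rfl | rfl | rfl <;> decide

set_option maxHeartbeats 1000000 in
lemma hmulH : ∀ g ∈ LH, ∀ h ∈ LH,
    Ftab IHex1 IHex5 (g * h) = Ftab IHex1 IHex5 g * Ftab IHex1 IHex5 h := by
  intro g hg h hh; fin_cases hg <;> fin_cases hh <;> decide


/-- Hexatonic duality: the restrictions `Ḡ` of the PL-group and `H̄` of
`H = {T₀, T₄, T₈, I₁, I₅, I₉}` to `Hex` are dual groups in the sense of Lewin: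
each acts simply transitively on `Hex` and each is the centralizer of the other
in `Sym(Hex)`; moreover both are isomorphic to `Sym(3)`, the dihedral group of
order 6. -/
theorem hexatonic_duality :
    (∀ Y Z : ↥HexT, ∃! g : Gbar, (g : Equiv.Perm ↥HexT) Y = Z) ∧
    (∀ Y Z : ↥HexT, ∃! h : Hbar, (h : Equiv.Perm ↥HexT) Y = Z) ∧
    Hbar = Subgroup.centralizer (Gbar : Set (Equiv.Perm ↥HexT)) ∧
    Gbar = Subgroup.centralizer (Hbar : Set (Equiv.Perm ↥HexT)) ∧
    Nonempty (Gbar ≃* Equiv.Perm (Fin 3)) ∧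
    Nonempty (Hbar ≃* Equiv.Perm (Fin 3)) := by
  have Y0 : ↥HexT := ⟨(3,7,10), by decide⟩
  exact ⟨simply_trans Gbar LG mem_Gbar hexG huG,
    simply_trans Hbar LH mem_Hbar hexH huH,
    cent_eq Gbar Hbar LG LH mem_Gbar mem_Hbar Y0
      (fun Z => hexH Y0 Z) (fun Y => hexG Y0 Y) hcommGH,
    cent_eq Hbar Gbar LH LG mem_Hbar mem_Gbar Y0
      (fun Z => hexG Y0 Z) (fun Y => hexH Y0 Y)
      (fun g hg h hh => (hcommGH h hh g hg).symm),
    ⟨isoOfList Gbar LG mem_Gbar (Ftab PHex LHex) (invFtab PHex LHex)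
      hinv1G hinv2G hmeminvG hmulG⟩,
    ⟨isoOfList Hbar LH mem_Hbar (Ftab IHex1 IHex5) (invFtab IHex1 IHex5)
      hinv1H hinv2H hmeminvH hmulH⟩⟩
end
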